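/- arXiv:1209.3460 — 3 statements merged into one kernel-verified Lean document; each statement's English description precedes it below -/
import Mathlib

section
/- Let G be a connected d-regular graph on 2n vertices with adjacency matrix A, and let λ be the second largest eigenvalue of A. If S is a nonempty set of vertices such that every vertex of S has at least γ neighbors within S, then |S| ≥ 2n(γ - λ)/(d - λ). -/
/-!
Let `N = |V|`, `s = |S|` and let `e` be the indicator vector of `S`. Since `G` is connected and
`d`-regular, the `d`-eigenvectors of `A` are the constant vectors, so on vectors orthogonal to
`𝟙` the quadratic form of `A` is at most `λ` times the squared norm. Applied to
`x = N e - s 𝟙` and expanded using `A 𝟙 = d 𝟙`, this reads `N eᵀAe - d s² ≤ λ (N s - s²)`.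
The degree condition gives `eᵀAe ≥ γ s`, and dividing by `s` leaves `N (γ - λ) ≤ s (d - λ)`.
-/

open Finset Matrix Module.End

theorem LinearMap.IsSymmetric.inner_map_self_le_of_inner_eigenvector_eq_zero
    {E : Type*} [NormedAddCommGroup E] [InnerProductSpace ℝ E] [FiniteDimensional ℝ E]
    {T : E →ₗ[ℝ] E} (hT : T.IsSymmetric) {lam : ℝ} {x : E}
    (hx : ∀ μ v, HasEigenvector T μ v → lam < μ → inner ℝ v x = 0) :
    inner ℝ (T x) x ≤ lam * inner ℝ x x := by
  set b := hT.eigenvectorBasis rfl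
  set μ := hT.eigenvalues rfl
  have hTb : ∀ i, inner ℝ (T x) (b i) = μ i * inner ℝ x (b i) := by
    intro i
    rw [hT, hT.apply_eigenvectorBasis, real_inner_smul_right]
    rfl
  rw [← b.sum_inner_mul_inner, ← b.sum_inner_mul_inner, mul_sum]
  refine sum_le_sum fun i _ => ?_
  rw [hTb, mul_assoc]
  rcases le_or_gt (μ i) lam with hle | hgt
  · rw [real_inner_comm x]
    exact mul_le_mul_of_nonneg_right hle (mul_self_nonneg _)
  · rw [hx _ _ (hT.hasEigenvector_eigenvectorBasis rfl i) hgt, mul_zero, mul_zero, mul_zero]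

theorem Matrix.hasEigenvector_toLin'_ofLp {𝕜 n : Type*} [RCLike 𝕜] [Fintype n] [DecidableEq n]
    {A : Matrix n n 𝕜} {μ : 𝕜} {v : EuclideanSpace 𝕜 n}
    (hv : HasEigenvector (toEuclideanLin A) μ v) : HasEigenvector (toLin' A) μ v.ofLp := by
  refine hasEigenvector_iff.mpr ⟨mem_eigenspace_iff.mpr ?_, by simpa using hv.2⟩
  rw [← ofLp_toLpLin, mem_eigenspace_iff.mp hv.1]
  rfl

theorem Matrix.IsHermitian.dotProduct_mulVec_le_of_dotProduct_eigenvector_eq_zero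
    {n : Type*} [Fintype n] [DecidableEq n] {A : Matrix n n ℝ} (hA : A.IsHermitian)
    {lam : ℝ} {x : n → ℝ}
    (hx : ∀ μ v, HasEigenvector (toLin' A) μ v → lam < μ → v ⬝ᵥ x = 0) :
    x ⬝ᵥ A *ᵥ x ≤ lam * (x ⬝ᵥ x) := by
  have key := (isSymmetric_toEuclideanLin_iff.mpr hA).inner_map_self_le_of_inner_eigenvector_eq_zero
    (x := WithLp.toLp 2 x) fun μ v hv hμ => by
      simpa [EuclideanSpace.inner_eq_star_dotProduct, dotProduct_comm] using
        hx μ _ (hasEigenvector_toLin'_ofLp hv) hμ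
  rwa [toLpLin_toLp, toLin'_apply, EuclideanSpace.inner_toLp_toLp,
    EuclideanSpace.inner_toLp_toLp, star_trivial] at key

theorem Matrix.IsSymm.card_mul_dotProduct_mulVec_sub_le {n : Type*} [Fintype n] [Nonempty n]
    {A : Matrix n n ℝ} (hA : A.IsSymm) {d lam : ℝ} (hd : A *ᵥ 1 = d • 1)
    (hquad : ∀ x : n → ℝ, ∑ i, x i = 0 → x ⬝ᵥ A *ᵥ x ≤ lam * (x ⬝ᵥ x)) (y : n → ℝ) :
    Fintype.card n * (y ⬝ᵥ A *ᵥ y) - d * (∑ i, y i) ^ 2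
      ≤ lam * (Fintype.card n * (y ⬝ᵥ y) - (∑ i, y i) ^ 2) := by
  set N : ℝ := (Fintype.card n : ℝ)
  set s := ∑ i, y i
  have hN : 0 < N := by positivity
  have h1y : (1 : n → ℝ) ⬝ᵥ y = s := one_dotProduct y
  have hy1 : y ⬝ᵥ 1 = s := dotProduct_one y
  have h11 : (1 : n → ℝ) ⬝ᵥ 1 = N := by simp [N]
  have h1Ay : (1 : n → ℝ) ⬝ᵥ A *ᵥ y = d * s := by
    rw [dotProduct_mulVec, ← mulVec_transpose, hA.eq, hd, smul_dotProduct, h1y, smul_eq_mul]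
  set x := N • y - s • 1
  have hx : ∑ i, x i = 0 := by
    rw [← one_dotProduct, dotProduct_sub, dotProduct_smul, dotProduct_smul, h1y, h11]
    simp only [smul_eq_mul]
    ring
  have hxAx : x ⬝ᵥ A *ᵥ x = N * (N * (y ⬝ᵥ A *ᵥ y) - d * s ^ 2) := by
    simp only [x, mulVec_sub, mulVec_smul, hd, sub_dotProduct, dotProduct_sub, smul_dotProduct,
      dotProduct_smul, h1Ay, hy1, h11, smul_eq_mul]
    ring
  have hxx : x ⬝ᵥ x = N * (N * (y ⬝ᵥ y) - s ^ 2) := by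
    simp only [x, sub_dotProduct, dotProduct_sub, smul_dotProduct, dotProduct_smul, h1y, hy1, h11,
      smul_eq_mul]
    ring
  have hquad_x := hquad x hx
  rw [hxAx, hxx, mul_left_comm] at hquad_x
  exact le_of_mul_le_mul_left hquad_x hN

theorem Finset.indicator_one_dotProduct {V : Type*} [Fintype V] (S : Finset V) (x : V → ℝ) :
    (S : Set V).indicator 1 ⬝ᵥ x = ∑ i ∈ S, x i := by
  classical
  simp [dotProduct, Set.indicator_apply, sum_ite_mem]

namespace SimpleGraph

variable {V : Type*} [Fintype V] {G : SimpleGraph V} [DecidableRel G.Adj] {d : ℕ}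

theorem Connected.apply_eq_of_adjMatrix_mulVec_eq_degree_smul [DecidableEq V]
    (hconn : G.Connected) (hreg : G.IsRegularOfDegree d) {v : V → ℝ}
    (hv : G.adjMatrix ℝ *ᵥ v = (d : ℝ) • v) (i j : V) : v i = v j := by
  have hlap : G.lapMatrix ℝ *ᵥ v = 0 := by
    ext k
    rw [lapMatrix_mulVec_apply, ← adjMatrix_mulVec_apply, hv, hreg k]
    simp
  exact G.lapMatrix_mulVec_eq_zero_iff_forall_reachable.mp hlap i j (hconn.preconnected i j)

theorem Connected.dotProduct_adjMatrix_mulVec_le_of_sum_eq_zero [DecidableEq V]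
    (hconn : G.Connected) (hreg : G.IsRegularOfDegree d) {lam : ℝ}
    (hlam : ∀ μ : ℝ, HasEigenvalue (toLin' (G.adjMatrix ℝ)) μ → μ = d ∨ μ ≤ lam)
    {x : V → ℝ} (hx : ∑ i, x i = 0) :
    x ⬝ᵥ G.adjMatrix ℝ *ᵥ x ≤ lam * (x ⬝ᵥ x) := by
  refine (isHermitian_adjMatrix ℝ G).dotProduct_mulVec_le_of_dotProduct_eigenvector_eq_zero
    fun μ v hv hμ => ?_
  have hμd : μ = d := (hlam μ (hasEigenvalue_of_hasEigenvector hv)).resolve_right hμ.not_ge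
  have hAv : G.adjMatrix ℝ *ᵥ v = (d : ℝ) • v := by
    rw [← toLin'_apply, ← hμd]
    exact mem_eigenspace_iff.mp hv.1
  obtain ⟨j⟩ := hconn.nonempty
  calc v ⬝ᵥ x = ∑ i, v j * x i :=
        sum_congr rfl fun i _ => by
          rw [hconn.apply_eq_of_adjMatrix_mulVec_eq_degree_smul hreg hAv i j]
    _ = 0 := by rw [← mul_sum, hx, mul_zero]

theorem IsRegularOfDegree.adjMatrix_mulVec_one (hreg : G.IsRegularOfDegree d) :
    G.adjMatrix ℝ *ᵥ 1 = (d : ℝ) • 1 := by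
  ext v
  simp [hreg v]

theorem adjMatrix_mulVec_indicator_one_apply (S : Finset V) (v : V) :
    (G.adjMatrix ℝ *ᵥ (S : Set V).indicator 1) v = #{u ∈ S | G.Adj v u} := by
  rw [mulVec, dotProduct_comm, indicator_one_dotProduct]
  simp [adjMatrix_apply, sum_boole]

end SimpleGraph

/-- Let G be a connected d-regular graph on 2n vertices, and let λ < d bound
all eigenvalues of the adjacency matrix other than d (the second largest
eigenvalue). If S is a nonempty set of vertices in which every vertex has at
least γ neighbors inside S, then |S| ≥ 2n(γ - λ)/(d - λ). -/
theorem expander_min_subgraph_size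
    (V : Type*) [Fintype V] [DecidableEq V]
    (n : ℕ) (hV : Fintype.card V = 2 * n)
    (G : SimpleGraph V) [DecidableRel G.Adj]
    (d : ℕ) (hreg : G.IsRegularOfDegree d)
    (hconn : G.Connected)
    (lam : ℝ) (hlam_lt : lam < d)
    (hlam : ∀ μ : ℝ, Module.End.HasEigenvalue
        (Matrix.toLin' (G.adjMatrix ℝ)) μ → μ = d ∨ μ ≤ lam)
    (γ : ℝ) (S : Finset V) (hS : S.Nonempty)
    (hdeg : ∀ v ∈ S, γ ≤ ((S.filter (fun u => G.Adj v u)).card : ℝ)) :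
    2 * n * (γ - lam) / (d - lam) ≤ (S.card : ℝ) := by
  have : Nonempty V := hconn.nonempty
  set e : V → ℝ := (S : Set V).indicator 1
  have he_sum : ∑ i, e i = #S := by
    simp [e, ← dotProduct_one, indicator_one_dotProduct]
  have hee : e ⬝ᵥ e = #S := by
    rw [indicator_one_dotProduct, sum_congr rfl fun i hi => Set.indicator_of_mem (mem_coe.mpr hi) 1]
    simp
  have heAe : γ * #S ≤ e ⬝ᵥ G.adjMatrix ℝ *ᵥ e := by
    rw [indicator_one_dotProduct, mul_comm, ← nsmul_eq_mul, ← sum_const]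
    exact sum_le_sum fun v hv =>
      (hdeg v hv).trans_eq (G.adjMatrix_mulVec_indicator_one_apply S v).symm
  have hmix := (G.isSymm_adjMatrix (α := ℝ)).card_mul_dotProduct_mulVec_sub_le
    hreg.adjMatrix_mulVec_one
    (fun _ hx => hconn.dotProduct_adjMatrix_mulVec_le_of_sum_eq_zero hreg hlam hx) e
  rw [he_sum, hee, hV] at hmix
  have hs : (0 : ℝ) < #S := by exact_mod_cast hS.card_pos
  rw [div_le_iff₀ (sub_pos.mpr hlam_lt)]
  push_cast at hmix
  nlinarith [mul_le_mul_of_nonneg_left heAe (by positivity : (0 : ℝ) ≤ 2 * n)]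
end

section
/- In the point-hyperplane incidence bipartite graph of PG(5, GF(2)), there is no induced bipartite subgraph with 9 points and 9 hyperplanes in which every point lies on at least 8 of the 9 hyperplanes and every hyperplane contains at least 8 of the 9 points. -/
open Module
open scoped Classical

lemma aux_card_pow {M : Type*} [AddCommGroup M] [Module (ZMod 2) M] [Finite M]
    (D : Submodule (ZMod 2) M) (F : Finset M) (hF : ∀ x ∈ F, x ∈ D) (h0 : (0 : M) ∉ F) :
    F.card + 1 ≤ 2 ^ finrank (ZMod 2) D := by
  classical
  cases nonempty_fintype M
  have hsub : insert (0 : M) F ⊆ (D : Set M).toFinset := by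
    intro x hx
    rw [Set.mem_toFinset]
    rcases Finset.mem_insert.1 hx with h | h
    · rw [h]; exact D.zero_mem
    · exact hF x h
  have h1 : (insert (0 : M) F).card = F.card + 1 := Finset.card_insert_of_notMem h0
  have h2 := Finset.card_le_card hsub
  have h3 : (D : Set M).toFinset.card = 2 ^ finrank (ZMod 2) D := by
    rw [Set.toFinset_card]
    have h4 : Fintype.card D = Fintype.card (ZMod 2) ^ finrank (ZMod 2) D :=
      card_eq_pow_finrank
    simpa [ZMod.card] using h4
  omega

/-- In the point-hyperplane incidence bipartite graph of PG(5, GF(2)), there is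
no induced subgraph with 9 points and 9 hyperplanes in which every point lies
on at least 8 of the 9 hyperplanes and every hyperplane contains at least 8 of
the 9 points. -/
theorem pg5_gf2_no_9_9_mindeg8_subgraph :
    ¬ ∃ (S T : Finset (Submodule (ZMod 2) (Fin 6 → ZMod 2))),
      S.card = 9 ∧ T.card = 9 ∧
      (∀ p ∈ S, finrank (ZMod 2) p = 1) ∧
      (∀ H ∈ T, finrank (ZMod 2) H = 5) ∧
      (∀ p ∈ S, 8 ≤ (T.filter (fun H => p ≤ H)).card) ∧
      (∀ H ∈ T, 8 ≤ (S.filter (fun p => p ≤ H)).card) := by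
  classical
  rintro ⟨S, T, hS9, hT9, hSdim, hTdim, hSdeg, hTdeg⟩
  have hVrank : finrank (ZMod 2) (Fin 6 → ZMod 2) = 6 := by
    simp [Module.finrank_fin_fun]
  -- choose a linear functional with kernel H, for each H ∈ T
  have hfun : ∀ H ∈ T, ∃ f : Module.Dual (ZMod 2) (Fin 6 → ZMod 2), LinearMap.ker f = H := by
    intro H hH
    have hq : finrank (ZMod 2) ((Fin 6 → ZMod 2) ⧸ H) = 1 := by
      have h := Submodule.finrank_quotient_add_finrank H
      rw [hVrank, hTdim H hH] at h; omega
    have he : Nonempty (((Fin 6 → ZMod 2) ⧸ H) ≃ₗ[ZMod 2] ZMod 2) :=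
      ⟨LinearEquiv.ofFinrankEq _ _ (by rw [hq, finrank_self])⟩
    obtain ⟨e⟩ := he
    refine ⟨e.toLinearMap ∘ₗ H.mkQ, ?_⟩
    rw [LinearMap.ker_comp, LinearEquiv.ker, Submodule.comap_bot, Submodule.ker_mkQ]
  choose! F hF using hfun
  -- W is the intersection of all hyperplanes in T
  set W : Submodule (ZMod 2) (Fin 6 → ZMod 2) := T.inf id with hWdef
  have hWle : ∀ H ∈ T, W ≤ H := fun H hH => Finset.inf_le hH
  -- the functionals are distinct, nonzero, and annihilate W
  have hFinj : Set.InjOn F T := by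
    intro a ha b hb h
    rw [← hF a ha, ← hF b hb, h]
  have himg : (T.image F).card = 9 := by
    rw [Finset.card_image_of_injOn hFinj, hT9]
  have hannmem : ∀ g ∈ T.image F, g ∈ W.dualAnnihilator := by
    intro g hg
    obtain ⟨H, hH, rfl⟩ := Finset.mem_image.1 hg
    rw [Submodule.mem_dualAnnihilator]
    intro x hx
    have : x ∈ LinearMap.ker (F H) := by rw [hF H hH]; exact hWle H hH hx
    exact this
  have h0img : (0 : Module.Dual (ZMod 2) (Fin 6 → ZMod 2)) ∉ T.image F := by
    intro hmem
    obtain ⟨H, hH, h0⟩ := Finset.mem_image.1 hmem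
    have hHtop : H = ⊤ := by rw [← hF H hH, h0, LinearMap.ker_zero]
    have h5 := hTdim H hH
    rw [hHtop, finrank_top, hVrank] at h5
    exact absurd h5 (by norm_num)
  have hDualFin : Finite (Module.Dual (ZMod 2) (Fin 6 → ZMod 2)) :=
    Finite.of_injective (fun f => (f : (Fin 6 → ZMod 2) → ZMod 2)) DFunLike.coe_injective
  have hannrank : finrank (ZMod 2) W.dualAnnihilator = 6 - finrank (ZMod 2) W := by
    have h1 : finrank (ZMod 2) W.dualAnnihilator
        = finrank (ZMod 2) (Module.Dual (ZMod 2) ((Fin 6 → ZMod 2) ⧸ W)) :=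
      (LinearEquiv.finrank_eq (Submodule.dualQuotEquivDualAnnihilator W)).symm
    rw [h1, Subspace.dual_finrank_eq]
    have h2 := Submodule.finrank_quotient_add_finrank W
    rw [hVrank] at h2
    omega
  have hTbound := aux_card_pow W.dualAnnihilator (T.image F) hannmem h0img
  rw [himg, hannrank] at hTbound
  have hwle6 : finrank (ZMod 2) W ≤ 6 := by
    have := Submodule.finrank_le W
    rwa [hVrank] at this
  have hw2 : finrank (ZMod 2) W ≤ 2 := by
    by_contra h
    push_neg at h
    have h36 : 6 - finrank (ZMod 2) W ≤ 3 := by omega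
    have := Nat.pow_le_pow_right (by norm_num : 1 ≤ 2) h36
    omega
  -- split S
  set S0 := S.filter (fun p => p ≤ W) with hS0def
  set S1 := S.filter (fun p => ¬ p ≤ W) with hS1def
  have hsplit : S0.card + S1.card = 9 := by
    rw [hS0def, hS1def, Finset.card_filter_add_card_filter_not, hS9]
  -- generators of the points
  have hgen : ∀ p ∈ S, ∃ x : Fin 6 → ZMod 2,
      x ∈ p ∧ x ≠ 0 ∧ p = Submodule.span (ZMod 2) {x} := by
    intro p hp
    have h1 : finrank (ZMod 2) p = 1 := hSdim p hp
    have hpbot : p ≠ ⊥ := by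
      intro h; rw [h] at h1; simp [finrank_bot] at h1
    obtain ⟨x, hxp, hx0⟩ := Submodule.exists_mem_ne_zero_of_ne_bot hpbot
    refine ⟨x, hxp, hx0, ?_⟩
    symm
    apply Submodule.eq_of_le_of_finrank_le
    · rw [Submodule.span_le, Set.singleton_subset_iff]; exact hxp
    · rw [finrank_span_singleton hx0, h1]
  choose! v hvmem hvne hvspan using hgen
  -- S0 bound
  have hS0bound : S0.card + 1 ≤ 2 ^ finrank (ZMod 2) W := by
    have hinj : Set.InjOn v S0 := by
      intro a ha b hb h
      have ha' := (Finset.mem_filter.1 ha).1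
      have hb' := (Finset.mem_filter.1 hb).1
      rw [hvspan a ha', hvspan b hb', h]
    have hc : (S0.image v).card = S0.card := Finset.card_image_of_injOn hinj
    rw [← hc]
    apply aux_card_pow
    · intro x hx
      obtain ⟨p, hp, rfl⟩ := Finset.mem_image.1 hx
      obtain ⟨hpS, hpW⟩ := Finset.mem_filter.1 hp
      exact hpW (hvmem p hpS)
    · intro hx
      obtain ⟨p, hp, h0⟩ := Finset.mem_image.1 hx
      exact hvne p (Finset.mem_filter.1 hp).1 h0
  -- each point of S1 misses a unique hyperplane
  have hphi : ∀ p ∈ S1, ∃ H ∈ T, ¬ p ≤ H := by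
    intro p hp
    obtain ⟨hpS, hpW⟩ := Finset.mem_filter.1 hp
    by_contra h
    push_neg at h
    exact hpW (Finset.le_inf fun H hH => h H hH)
  choose! φ hφT hφmiss using hphi
  have hfilter_eq : ∀ p ∈ S1, T.filter (fun H => p ≤ H) = T.erase (φ p) := by
    intro p hp
    have hpS := (Finset.mem_filter.1 hp).1
    apply Finset.eq_of_subset_of_card_le
    · intro H hH
      obtain ⟨hHT, hple⟩ := Finset.mem_filter.1 hH
      refine Finset.mem_erase.2 ⟨?_, hHT⟩
      rintro rfl
      exact hφmiss p hp hple
    · rw [Finset.card_erase_of_mem (hφT p hp), hT9]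
      have := hSdeg p hpS
      omega
  have hmem_other : ∀ p ∈ S1, ∀ H ∈ T, H ≠ φ p → p ≤ H := by
    intro p hp H hH hne
    have : H ∈ T.filter (fun H => p ≤ H) := by
      rw [hfilter_eq p hp]
      exact Finset.mem_erase.2 ⟨hne, hH⟩
    exact (Finset.mem_filter.1 this).2
  have hφinj : Set.InjOn φ S1 := by
    intro a ha b hb h
    by_contra hne
    have haS := (Finset.mem_filter.1 ha).1
    have hbS := (Finset.mem_filter.1 hb).1
    have hsub : S.filter (fun p => p ≤ φ a) ⊆ (S.erase a).erase b := by
      intro q hq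
      obtain ⟨hqS, hqle⟩ := Finset.mem_filter.1 hq
      refine Finset.mem_erase.2 ⟨?_, Finset.mem_erase.2 ⟨?_, hqS⟩⟩
      · rintro rfl
        exact hφmiss _ hb (h ▸ hqle)
      · rintro rfl
        exact hφmiss _ ha hqle
    have h1 := hTdeg (φ a) (hφT a ha)
    have h2 := Finset.card_le_card hsub
    have hbmem : b ∈ S.erase a := Finset.mem_erase.2 ⟨fun hba => hne hba.symm, hbS⟩
    rw [Finset.card_erase_of_mem hbmem, Finset.card_erase_of_mem haS, hS9] at h2
    omega
  -- linear independence of the S1 generators modulo W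
  have hindep : LinearIndependent (ZMod 2)
      (fun p : ↥S1 => Submodule.Quotient.mk (p := W) (v ↑p)) := by
    rw [linearIndependent_iff']
    intro s g hsum i hi
    have hiS1 : (i : Submodule (ZMod 2) (Fin 6 → ZMod 2)) ∈ S1 := i.2
    have hiS : (i : Submodule (ZMod 2) (Fin 6 → ZMod 2)) ∈ S := (Finset.mem_filter.1 hiS1).1
    have hφi := hφT _ hiS1
    have hu : (∑ j ∈ s, g j • v ↑j) ∈ W := by
      have hmk : W.mkQ (∑ j ∈ s, g j • v ↑j) = 0 := by
        rw [map_sum]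
        simpa only [map_smul, Submodule.mkQ_apply] using hsum
      rwa [← LinearMap.mem_ker, Submodule.ker_mkQ] at hmk
    have h0 : F (φ ↑i) (∑ j ∈ s, g j • v ↑j) = 0 := by
      have : (∑ j ∈ s, g j • v ↑j) ∈ LinearMap.ker (F (φ ↑i)) := by
        rw [hF _ hφi]; exact hWle _ hφi hu
      exact this
    rw [map_sum] at h0
    have hterm : ∀ j ∈ s, j ≠ i → F (φ ↑i) (g j • v ↑j) = 0 := by
      intro j hj hji
      have hjS1 : (j : Submodule (ZMod 2) (Fin 6 → ZMod 2)) ∈ S1 := j.2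
      have hjS : (j : Submodule (ZMod 2) (Fin 6 → ZMod 2)) ∈ S := (Finset.mem_filter.1 hjS1).1
      have hle : (j : Submodule (ZMod 2) (Fin 6 → ZMod 2)) ≤ φ ↑i := by
        apply hmem_other _ hjS1 _ hφi
        intro heq
        exact hji (Subtype.ext (hφinj hjS1 hiS1 heq.symm))
      have hvj : v ↑j ∈ LinearMap.ker (F (φ ↑i)) := by
        rw [hF _ hφi]; exact hle (hvmem _ hjS)
      rw [map_smul, LinearMap.mem_ker.1 hvj, smul_zero]
    rw [Finset.sum_eq_single i hterm (fun h => absurd hi h)] at h0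
    rw [map_smul] at h0
    have hc : F (φ ↑i) (v ↑i) ≠ 0 := by
      intro hc0
      have hvi : v ↑i ∈ φ ↑i := by
        have : v ↑i ∈ LinearMap.ker (F (φ ↑i)) := LinearMap.mem_ker.2 hc0
        rwa [hF _ hφi] at this
      have hsp : Submodule.span (ZMod 2) {v ↑i} ≤ φ ↑i := by
        rw [Submodule.span_le, Set.singleton_subset_iff]
        exact hvi
      exact hφmiss _ hiS1 (le_trans (le_of_eq (hvspan _ hiS)) hsp)
    exact (smul_eq_zero.1 h0).resolve_right hc
  have hS1bound : S1.card + finrank (ZMod 2) W ≤ 6 := by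
    have h1 := hindep.fintype_card_le_finrank
    rw [Fintype.card_coe] at h1
    have h2 := Submodule.finrank_quotient_add_finrank W
    rw [hVrank] at h2
    exact le_trans (Nat.add_le_add_right h1 (finrank (ZMod 2) W)) (le_of_eq h2)
  -- conclude
  set w := finrank (ZMod 2) W with hw
  interval_cases w
  · have he : (2 : ℕ) ^ 0 = 1 := by norm_num
    omega
  · have he : (2 : ℕ) ^ 1 = 2 := by norm_num
    omega
  · have he : (2 : ℕ) ^ 2 = 4 := by norm_num
    omega
end

section
/- In the point-hyperplane incidence bipartite graph of PG(5, GF(2)), there is no induced bipartite subgraph with 10 points and 10 hyperplanes in which every point lies on at least 8 of the 10 hyperplanes and every hyperplane contains at least 8 of the 10 points. -/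
/-!
Put a nonzero vector `v i` on each point and a functional `φ j` with kernel each hyperplane.
The non-incidence matrix `(φ j (v i))` over `𝔽₂` has at most two nonzero entries in each row
and column. A family of vectors in which each coordinate is nonzero in at most two members
behaves like the incidence vectors of the vertices of a graph: a minimal zero-sum subfamily is
a whole component, so splitting off such components shows that the rank is at least half the
number of nonzero members, and at least two thirds of it when the members are also distinct.

The points span a 5-space: ten nonzero points need dimension at least 4; in dimension 4 each
hyperplane, containing 8 of the points, would contain their span, leaving only 3 nonzero
candidates for the ten functionals; in dimension 6 the ten columns would be distinct and
nonzero, so `20 ≤ 3 * 6`. Dually the functionals span a 5-space, and evaluation at the points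
has a kernel `⟨λ⟩` of dimension 1. If `λ` is not in the span of the functionals, the ten
columns are distinct and nonzero of rank at most 5, so `20 ≤ 15`; otherwise at least nine
columns are nonzero and have rank at most 4, so `9 ≤ 8`.
-/

open Module
open scoped Classical

open Finset Submodule

namespace PGIncidence

section SparseFamily

variable {X ι : Type*} {A D : Finset ι} {c : ι → X → ZMod 2}

def CoveredAtMostTwice (A : Finset ι) (c : ι → X → ZMod 2) : Prop :=
  ∀ x, #{i ∈ A | c i x ≠ 0} ≤ 2

lemma sum_apply_eq_card_filter (D : Finset ι) (c : ι → X → ZMod 2) (x : X) :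
    (∑ i ∈ D, c i) x = #{i ∈ D | c i x ≠ 0} := by
  rw [Finset.sum_apply, Finset.natCast_card_filter]
  exact Finset.sum_congr rfl fun i _ => by generalize c i x = a; revert a; decide

/-- A coordinate met by the zero-sum subfamily `D` is met an even number of times inside `D`,
hence by both members of `A` that can meet it. -/
lemma mem_of_sum_eq_zero (hcov : CoveredAtMostTwice A c) (hDA : D ⊆ A)
    (hsum : ∑ i ∈ D, c i = 0) {x : X} {i : ι} (hi : i ∈ D) (hix : c i x ≠ 0)
    {j : ι} (hj : j ∈ A) (hjx : c j x ≠ 0) : j ∈ D := by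
  have hsub : {i ∈ D | c i x ≠ 0} ⊆ {i ∈ A | c i x ≠ 0} := filter_subset_filter _ hDA
  have heven : 2 ∣ #{i ∈ D | c i x ≠ 0} := by
    rw [← ZMod.natCast_eq_zero_iff, ← sum_apply_eq_card_filter, hsum, Pi.zero_apply]
  have hpos : 0 < #{i ∈ D | c i x ≠ 0} := card_pos.2 ⟨i, mem_filter.2 ⟨hi, hix⟩⟩
  have heq := eq_of_subset_of_card_le hsub (by have := hcov x; omega)
  exact (mem_filter.1 (heq ▸ mem_filter.2 ⟨hj, hjx⟩)).1

lemma linearIndepOn_of_sum_ne_zero {M : Type*} [AddCommGroup M] [Module (ZMod 2) M]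
    {s : Finset ι} {c : ι → M} (h : ∀ t ⊆ s, t.Nonempty → ∑ i ∈ t, c i ≠ 0) :
    LinearIndepOn (ZMod 2) c (s : Set ι) := by
  rw [linearIndepOn_iff]
  intro l hl hl0
  by_contra hne
  refine h l.support (by exact_mod_cast (Finsupp.mem_supported _ _).1 hl)
    (Finsupp.support_nonempty_iff.2 hne) ?_
  rw [Finsupp.linearCombination_apply, Finsupp.sum] at hl0
  have hone : ∀ i ∈ l.support, l i • c i = c i := fun i hi => by
    rw [Finsupp.mem_support_iff] at hi
    rw [show l i = 1 by generalize l i = a at hi; revert a; decide, one_smul]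
  rwa [Finset.sum_congr rfl hone] at hl0

lemma CoveredAtMostTwice.mono {B : Finset ι} (h : CoveredAtMostTwice A c) (hBA : B ⊆ A) :
    CoveredAtMostTwice B c :=
  fun x => (card_le_card (filter_subset_filter _ hBA)).trans (h x)

instance finiteDimensional_span_image {K M : Type*} [Field K] [AddCommGroup M] [Module K M]
    (s : Finset ι) (c : ι → M) : FiniteDimensional K (span K (c '' s)) :=
  FiniteDimensional.span_of_finite K (s.finite_toSet.image c)

lemma finrank_span_image_eq_card {K M : Type*} [Field K] [AddCommGroup M] [Module K M]
    {s : Finset ι} {c : ι → M} (h : LinearIndepOn K c (s : Set ι)) :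
    finrank K (span K (c '' s)) = #s := by
  rw [Set.image_eq_range, finrank_span_eq_card h]
  simp

lemma disjoint_span_sdiff_span_of_sum_eq_zero (hcov : CoveredAtMostTwice A c) (hDA : D ⊆ A)
    (hsum : ∑ i ∈ D, c i = 0) :
    Disjoint (span (ZMod 2) (c '' ↑(A \ D))) (span (ZMod 2) (c '' ↑D)) := by
  set Y : Set X := {x | ∃ i ∈ D, c i x ≠ 0}
  have hrest : span (ZMod 2) (c '' ↑(A \ D)) ≤ Submodule.pi Y fun _ => ⊥ := by
    rw [span_le]
    rintro _ ⟨j, hj, rfl⟩ x ⟨i, hi, hix⟩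
    rw [coe_sdiff, Set.mem_sdiff] at hj
    by_contra hjx
    exact hj.2 (mem_of_sum_eq_zero hcov hDA hsum hi hix hj.1 hjx)
  have hDspan : span (ZMod 2) (c '' ↑D) ≤ Submodule.pi Yᶜ fun _ => ⊥ := by
    rw [span_le]
    rintro _ ⟨i, hi, rfl⟩ x hx
    by_contra hix
    exact hx ⟨i, hi, hix⟩
  refine disjoint_def.2 fun g h1 h2 => funext fun x => ?_
  by_cases hx : x ∈ Y
  · exact mem_pi.1 (hrest h1) x hx
  · exact mem_pi.1 (hDspan h2) x hx

/-- Splitting off a minimal zero-sum subfamily `D` costs at most `#D - 1` in rank, since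
`D` minus a member is independent. -/
lemma finrank_span_sdiff_add_card_le (hcov : CoveredAtMostTwice A c) (hDA : D ⊆ A)
    (hsum : ∑ i ∈ D, c i = 0) (hmin : ∀ t ⊆ D, t.Nonempty → ∑ i ∈ t, c i = 0 → #D ≤ #t)
    {i₀ : ι} (hi₀ : i₀ ∈ D) :
    finrank (ZMod 2) (span (ZMod 2) (c '' ↑(A \ D))) + #D ≤
      finrank (ZMod 2) (span (ZMod 2) (c '' ↑A)) + 1 := by
  have hsup : span (ZMod 2) (c '' ↑A) =
      span (ZMod 2) (c '' ↑(A \ D)) ⊔ span (ZMod 2) (c '' ↑D) := by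
    rw [← span_union, ← Set.image_union, ← coe_union, sdiff_union_of_subset hDA]
  have hindep : LinearIndepOn (ZMod 2) c ↑(D.erase i₀) := by
    refine linearIndepOn_of_sum_ne_zero fun t ht htne hzero => ?_
    have := hmin t (ht.trans (erase_subset _ _)) htne hzero
    have := card_le_card ht
    rw [card_erase_of_mem hi₀] at this
    have := card_pos.2 ⟨i₀, hi₀⟩
    omega
  have hDrank : #D ≤ finrank (ZMod 2) (span (ZMod 2) (c '' ↑D)) + 1 := by
    have := finrank_span_image_eq_card hindep
    have := Submodule.finrank_mono
      (span_mono (Set.image_mono (coe_subset.2 (erase_subset i₀ D))) :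
        span (ZMod 2) (c '' ↑(D.erase i₀)) ≤ span (ZMod 2) (c '' ↑D))
    rw [card_erase_of_mem hi₀] at *
    omega
  have := finrank_sup_add_finrank_inf_eq
    (span (ZMod 2) (c '' ↑(A \ D))) (span (ZMod 2) (c '' ↑D))
  rw [(disjoint_span_sdiff_span_of_sum_eq_zero hcov hDA hsum).eq_bot, finrank_bot, ← hsup] at this
  omega

theorem mul_card_le_succ_mul_finrank_span (m : ℕ) (hcov : CoveredAtMostTwice A c)
    (hcirc : ∀ D ⊆ A, D.Nonempty → ∑ i ∈ D, c i = 0 → m < #D) :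
    m * #A ≤ (m + 1) * finrank (ZMod 2) (span (ZMod 2) (c '' ↑A)) := by
  induction A using Finset.strongInduction with
  | H A ih =>
  by_cases hdep : ∃ D ⊆ A, D.Nonempty ∧ ∑ i ∈ D, c i = 0
  · obtain ⟨D₀, hD₀⟩ := hdep
    obtain ⟨D, hD, hDmin⟩ := exists_min_image
      {D ∈ A.powerset | D.Nonempty ∧ ∑ i ∈ D, c i = 0} card
      ⟨D₀, mem_filter.2 ⟨mem_powerset.2 hD₀.1, hD₀.2⟩⟩
    obtain ⟨hDA, ⟨i₀, hi₀⟩, hsum⟩ := mem_filter.1 hD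
    rw [mem_powerset] at hDA
    have hstep := finrank_span_sdiff_add_card_le hcov hDA hsum
      (fun t ht htne htsum =>
        hDmin t (mem_filter.2 ⟨mem_powerset.2 (ht.trans hDA), htne, htsum⟩)) hi₀
    have hrest := ih (A \ D) (sdiff_ssubset hDA ⟨i₀, hi₀⟩) (hcov.mono sdiff_subset)
      fun t ht => hcirc t (ht.trans sdiff_subset)
    have hmD := hcirc D hDA ⟨i₀, hi₀⟩ hsum
    have hcard := card_sdiff_add_card_eq_card hDA
    nlinarith [Nat.mul_le_mul_left (m + 1) hstep]
  · push Not at hdep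
    rw [finrank_span_image_eq_card (linearIndepOn_of_sum_ne_zero hdep)]
    exact Nat.mul_le_mul_right _ (Nat.le_succ m)

lemma one_lt_card_of_sum_eq_zero {M : Type*} [AddCommGroup M] {c : ι → M}
    (h0 : ∀ i ∈ A, c i ≠ 0) (hDA : D ⊆ A) (hD : D.Nonempty) (hsum : ∑ i ∈ D, c i = 0) :
    1 < #D := by
  by_contra hle
  obtain ⟨i, rfl⟩ := card_eq_one.1 (le_antisymm (not_lt.1 hle) (card_pos.2 hD))
  exact h0 i (hDA (mem_singleton_self i)) (by simpa using hsum)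

lemma two_lt_card_of_sum_eq_zero {M : Type*} [AddCommGroup M] [Module (ZMod 2) M]
    {c : ι → M} (hinj : Set.InjOn c A) (h0 : ∀ i ∈ A, c i ≠ 0) (hDA : D ⊆ A) (hD : D.Nonempty)
    (hsum : ∑ i ∈ D, c i = 0) : 2 < #D := by
  have h1 := one_lt_card_of_sum_eq_zero h0 hDA hD hsum
  by_contra hle
  obtain ⟨a, b, hab, rfl⟩ := card_eq_two.1 (show #D = 2 by omega)
  rw [sum_pair hab, add_eq_zero_iff_eq_neg, ZModModule.neg_eq_self] at hsum
  exact hab (hinj (hDA (by simp)) (hDA (by simp)) hsum)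

lemma card_le_two_mul_finrank_span (hcov : CoveredAtMostTwice A c) (h0 : ∀ i ∈ A, c i ≠ 0) :
    #A ≤ 2 * finrank (ZMod 2) (span (ZMod 2) (c '' ↑A)) := by
  simpa using mul_card_le_succ_mul_finrank_span 1 hcov
    fun _ hDA hD hsum => one_lt_card_of_sum_eq_zero h0 hDA hD hsum

lemma two_mul_card_le_three_mul_finrank_span (hcov : CoveredAtMostTwice A c)
    (hinj : Set.InjOn c A) (h0 : ∀ i ∈ A, c i ≠ 0) :
    2 * #A ≤ 3 * finrank (ZMod 2) (span (ZMod 2) (c '' ↑A)) :=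
  mul_card_le_succ_mul_finrank_span 2 hcov
    fun _ hDA hD hsum => two_lt_card_of_sum_eq_zero hinj h0 hDA hD hsum

end SparseFamily

section Dual

variable {K U ι : Type*} [Field K] [AddCommGroup U] [Module K U]

variable (K) in
def evalAt (v : ι → U) : Dual K U →ₗ[K] ι → K :=
  LinearMap.pi fun i => Dual.eval K U (v i)

@[simp]
lemma evalAt_apply (v : ι → U) (f : Dual K U) (i : ι) : evalAt K v f i = f (v i) := rfl

variable (K) in
lemma ker_evalAt (v : ι → U) :
    LinearMap.ker (evalAt K v) = (span K (Set.range v)).dualAnnihilator := by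
  ext f
  rw [LinearMap.mem_ker, ← SetLike.mem_coe, coe_dualAnnihilator_span]
  simp [funext_iff, Set.range_subset_iff]

variable (K) in
lemma finrank_ker_evalAt [FiniteDimensional K U] (v : ι → U) :
    finrank K (LinearMap.ker (evalAt K v)) + finrank K (span K (Set.range v)) =
      finrank K U := by
  rw [ker_evalAt, add_comm, Subspace.finrank_add_finrank_dualAnnihilator_eq]

variable (K) in
lemma finrank_range_evalAt [FiniteDimensional K U] (v : ι → U) :
    finrank K (LinearMap.range (evalAt K v)) = finrank K (span K (Set.range v)) := by
  have := (evalAt K v).finrank_range_add_finrank_ker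
  rw [Subspace.dual_finrank_eq, ← finrank_ker_evalAt K v] at this
  omega

lemma finrank_map_lt_of_not_disjoint_ker {N : Type*} [AddCommGroup N] [Module K N]
    [FiniteDimensional K U] (f : U →ₗ[K] N) {F : Submodule K U}
    (h : ¬Disjoint F (LinearMap.ker f)) :
    finrank K (F.map f) < finrank K F := by
  have hker : LinearMap.ker (f.domRestrict F) ≠ ⊥ := by
    rwa [Ne, LinearMap.ker_eq_bot, LinearMap.injective_domRestrict_iff]
  have := (f.domRestrict F).finrank_range_add_finrank_ker
  rw [LinearMap.range_domRestrict] at this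
  have := Submodule.finrank_eq_zero.not.2 hker
  omega

lemma exists_eq_span_singleton_of_finrank_eq_one {p : Submodule K U} (h : finrank K p = 1) :
    ∃ w, w ≠ 0 ∧ p = span K {w} := by
  have : FiniteDimensional K p := .of_finrank_pos (by omega)
  obtain ⟨w, hwp, hw0⟩ := exists_mem_ne_zero_of_ne_bot (p := p)
    (fun hp => by rw [hp, finrank_bot] at h; exact zero_ne_one h)
  refine ⟨w, hw0, (eq_of_le_of_finrank_le ((span_singleton_le_iff_mem w p).2 hwp) ?_).symm⟩
  rw [h, finrank_span_singleton hw0]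

lemma exists_eq_ker_of_finrank_add_one_eq [FiniteDimensional K U] {H : Submodule K U}
    (h : finrank K H + 1 = finrank K U) : ∃ f : Dual K U, f ≠ 0 ∧ H = LinearMap.ker f := by
  obtain ⟨f, hf0, hHf⟩ := H.exists_le_ker_of_lt_top
    (lt_top_iff_ne_top.2 fun hH => by rw [hH, finrank_top] at h; omega)
  have := Submodule.finrank_lt (mt LinearMap.ker_eq_top.1 hf0)
  exact ⟨f, hf0, eq_of_le_of_finrank_le hHf (by omega)⟩

end Dual

section Binary

variable {U ι : Type*} [AddCommGroup U] [Module (ZMod 2) U] [FiniteDimensional (ZMod 2) U]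

lemma card_lt_two_pow_finrank {W : Submodule (ZMod 2) U} {s : Finset ι} {u : ι → U}
    (hinj : Set.InjOn u s) (hW : ∀ i ∈ s, u i ∈ W) (h0 : ∀ i ∈ s, u i ≠ 0) :
    #s < 2 ^ finrank (ZMod 2) W := by
  have : Finite U := Module.finite_of_finite (ZMod 2)
  have hsub : u '' s ⊆ (W : Set U) \ {0} := by
    rintro _ ⟨i, hi, rfl⟩
    exact ⟨hW i hi, h0 i hi⟩
  have hW : ((W : Set U) \ {0}).ncard + 1 = 2 ^ finrank (ZMod 2) W := by
    rw [Set.ncard_sdiff_singleton_add_one W.zero_mem, ← Nat.card_coe_set_eq,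
      SetLike.coe_sort_coe, Module.natCard_eq_pow_finrank (K := ZMod 2), Nat.card_zmod]
  have := Set.ncard_le_ncard hsub
  rw [hinj.ncard_image, Set.ncard_coe_finset] at this
  omega

lemma le_ker_of_two_pow_le_card {W : Submodule (ZMod 2) U} {f : Dual (ZMod 2) U}
    {s : Finset ι} {u : ι → U} (hinj : Set.InjOn u s) (hW : ∀ i ∈ s, u i ∈ W)
    (h0 : ∀ i ∈ s, u i ≠ 0) (hf : ∀ i ∈ s, f (u i) = 0)
    (hcard : 2 ^ (finrank (ZMod 2) W - 1) ≤ #s) : W ≤ LinearMap.ker f := by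
  have hlt := card_lt_two_pow_finrank (W := W ⊓ LinearMap.ker f) hinj
    (fun i hi => mem_inf.2 ⟨hW i hi, hf i hi⟩) h0
  have hle := (Nat.pow_lt_pow_iff_right (by norm_num)).1 (hcard.trans_lt hlt)
  have heq := eq_of_le_of_finrank_le (inf_le_left : W ⊓ LinearMap.ker f ≤ W) (by omega)
  exact inf_eq_left.1 heq

end Binary

section Configuration

variable {U ι κ : Type*} [AddCommGroup U] [Module (ZMod 2) U] [FiniteDimensional (ZMod 2) U]
  [Fintype κ] {v : ι → U} {φ : κ → Dual (ZMod 2) U}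

/-- The vectors `evalAt v (φ j)` are the columns of the non-incidence matrix; the
disjointness makes them distinct and nonzero. -/
lemma two_mul_card_le_three_mul_finrank_of_disjoint (hφ : Function.Injective φ)
    (hφ0 : ∀ j, φ j ≠ 0) (hrow : ∀ i, #{j | φ j (v i) ≠ 0} ≤ 2)
    (hdisj : Disjoint (span (ZMod 2) (Set.range φ)) (LinearMap.ker (evalAt (ZMod 2) v))) :
    2 * Fintype.card κ ≤ 3 * finrank (ZMod 2) (span (ZMod 2) (Set.range v)) := by
  have hinj : Set.InjOn (evalAt (ZMod 2) v) (span (ZMod 2) (Set.range φ)) :=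
    LinearMap.disjoint_ker_iff_injOn.1 hdisj
  have hmem j : φ j ∈ span (ZMod 2) (Set.range φ) := subset_span ⟨j, rfl⟩
  have hbound := two_mul_card_le_three_mul_finrank_span (A := univ)
    (c := fun j => evalAt (ZMod 2) v (φ j)) (fun i => hrow i)
    (fun j _ k _ hjk => hφ (hinj (hmem j) (hmem k) hjk))
    (fun j _ hj => hφ0 j (hinj (hmem j) (zero_mem _) (hj.trans (map_zero _).symm)))
  have hrange : span (ZMod 2) ((fun j => evalAt (ZMod 2) v (φ j)) '' ↑(univ : Finset κ)) ≤
      LinearMap.range (evalAt (ZMod 2) v) := by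
    rw [span_le]
    rintro _ ⟨j, -, rfl⟩
    exact LinearMap.mem_range_self _ _
  have := Submodule.finrank_mono hrange
  rw [finrank_range_evalAt, card_univ] at *
  omega

lemma finrank_span_range_lt (hφ : Function.Injective φ) (hφ0 : ∀ j, φ j ≠ 0)
    (hrow : ∀ i, #{j | φ j (v i) ≠ 0} ≤ 2)
    (hκ : 3 * finrank (ZMod 2) U < 2 * Fintype.card κ) :
    finrank (ZMod 2) (span (ZMod 2) (Set.range v)) < finrank (ZMod 2) U := by
  refine Submodule.finrank_lt fun htop => ?_
  have := two_mul_card_le_three_mul_finrank_of_disjoint hφ hφ0 hrow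
    (by rw [ker_evalAt, htop, dualAnnihilator_top]; exact disjoint_bot_right)
  rw [htop, finrank_top] at this
  omega

variable [Fintype ι]

lemma card_add_two_le_two_mul_finrank_of_not_disjoint (hrow : ∀ i, #{j | φ j (v i) ≠ 0} ≤ 2)
    (hdisj : ¬Disjoint (span (ZMod 2) (Set.range φ)) (LinearMap.ker (evalAt (ZMod 2) v))) :
    #{j | evalAt (ZMod 2) v (φ j) ≠ 0} + 2 ≤
      2 * finrank (ZMod 2) (span (ZMod 2) (Set.range φ)) := by
  set A : Finset κ := {j | evalAt (ZMod 2) v (φ j) ≠ 0}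
  have hbound := card_le_two_mul_finrank_span (A := A) (c := fun j => evalAt (ZMod 2) v (φ j))
    (CoveredAtMostTwice.mono (fun i => hrow i) (subset_univ A)) fun j hj => (mem_filter.1 hj).2
  have hmap : span (ZMod 2) ((fun j => evalAt (ZMod 2) v (φ j)) '' ↑A) ≤
      (span (ZMod 2) (Set.range φ)).map (evalAt (ZMod 2) v) := by
    rw [span_le]
    rintro _ ⟨j, -, rfl⟩
    exact mem_map_of_mem (subset_span ⟨j, rfl⟩)
  have := Submodule.finrank_mono hmap
  have := finrank_map_lt_of_not_disjoint_ker (evalAt (ZMod 2) v) hdisj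
  omega

/-- Points `span {v i}` and hyperplanes `ker (φ j)`, where `φ j (v i) ≠ 0` means that the
point is off the hyperplane. -/
structure SparseNonincidence (v : ι → U) (φ : κ → Dual (ZMod 2) U) : Prop where
  point_injective : Function.Injective v
  point_ne_zero : ∀ i, v i ≠ 0
  functional_injective : Function.Injective φ
  functional_ne_zero : ∀ j, φ j ≠ 0
  card_nonincident_point_le : ∀ i, #{j | φ j (v i) ≠ 0} ≤ 2
  card_nonincident_functional_le : ∀ j, #{i | φ j (v i) ≠ 0} ≤ 2

lemma SparseNonincidence.dual (h : SparseNonincidence v φ) :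
    SparseNonincidence φ fun i => Dual.eval (ZMod 2) U (v i) where
  point_injective := h.functional_injective
  point_ne_zero := h.functional_ne_zero
  functional_injective := (bijective_dual_eval (ZMod 2) U).1.comp h.point_injective
  functional_ne_zero i h0 :=
    h.point_ne_zero i ((bijective_dual_eval (ZMod 2) U).1 (h0.trans (map_zero _).symm))
  card_nonincident_point_le := h.card_nonincident_functional_le
  card_nonincident_functional_le := h.card_nonincident_point_le

lemma SparseNonincidence.finrank_span_eq_five (h : SparseNonincidence v φ)
    (hU : finrank (ZMod 2) U = 6) (hι : Fintype.card ι = 10) (hκ : Fintype.card κ = 10) :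
    finrank (ZMod 2) (span (ZMod 2) (Set.range v)) = 5 := by
  have hmem i : v i ∈ span (ZMod 2) (Set.range v) := subset_span ⟨i, rfl⟩
  have hlt := finrank_span_range_lt h.functional_injective h.functional_ne_zero
    h.card_nonincident_point_le (by omega)
  have hpoints : 10 < 2 ^ finrank (ZMod 2) (span (ZMod 2) (Set.range v)) := by
    simpa [hι] using card_lt_two_pow_finrank (s := univ) h.point_injective.injOn
      (fun i _ => hmem i) fun i _ => h.point_ne_zero i
  have hne : finrank (ZMod 2) (span (ZMod 2) (Set.range v)) ≠ 4 := by
    intro h4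
    -- a hyperplane through 8 of the points contains all of them
    have hker j : φ j ∈ LinearMap.ker (evalAt (ZMod 2) v) := by
      rw [ker_evalAt, mem_dualAnnihilator]
      refine fun w hw => le_ker_of_two_pow_le_card (s := {i | φ j (v i) = 0})
        h.point_injective.injOn (fun i _ => hmem i) (fun i _ => h.point_ne_zero i)
        (fun i hi => (mem_filter.1 hi).2) ?_ hw
      have := h.card_nonincident_functional_le j
      have : #{i | φ j (v i) = 0} + #{i | φ j (v i) ≠ 0} = 10 := by
        rw [← hι, ← card_univ]; exact card_filter_add_card_filter_not _
      rw [h4]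
      omega
    have hfunctionals := card_lt_two_pow_finrank (s := univ) h.functional_injective.injOn
      (fun j _ => hker j) fun j _ => h.functional_ne_zero j
    have := finrank_ker_evalAt (ZMod 2) v
    rw [card_univ, hκ, show finrank (ZMod 2) (LinearMap.ker (evalAt (ZMod 2) v)) = 2 by omega]
      at hfunctionals
    norm_num at hfunctionals
  have hge : 4 ≤ finrank (ZMod 2) (span (ZMod 2) (Set.range v)) := by
    by_contra! hr
    have := Nat.pow_le_pow_right two_pos (show finrank (ZMod 2) (span (ZMod 2) (Set.range v)) ≤ 3
      by omega)
    omega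
  omega

theorem not_sparseNonincidence (hU : finrank (ZMod 2) U = 6) (hι : Fintype.card ι = 10)
    (hκ : Fintype.card κ = 10) : ¬SparseNonincidence v φ := by
  intro h
  have hv := h.finrank_span_eq_five hU hι hκ
  have hφ := h.dual.finrank_span_eq_five (by rwa [Subspace.dual_finrank_eq]) hκ hι
  have hker := finrank_ker_evalAt (ZMod 2) v
  rw [hv, hU] at hker
  by_cases hdisj : Disjoint (span (ZMod 2) (Set.range φ)) (LinearMap.ker (evalAt (ZMod 2) v))
  · have := two_mul_card_le_three_mul_finrank_of_disjoint h.functional_injective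
      h.functional_ne_zero h.card_nonincident_point_le hdisj
    omega
  · have := card_add_two_le_two_mul_finrank_of_not_disjoint h.card_nonincident_point_le hdisj
    have hzero := card_lt_two_pow_finrank (s := {j | evalAt (ZMod 2) v (φ j) = 0})
      (W := LinearMap.ker (evalAt (ZMod 2) v)) h.functional_injective.injOn
      (fun j hj => (mem_filter.1 hj).2)
      fun j _ => h.functional_ne_zero j
    have : #{j | evalAt (ZMod 2) v (φ j) = 0} + #{j | evalAt (ZMod 2) v (φ j) ≠ 0} = 10 := by
      rw [← hκ, ← card_univ]; exact card_filter_add_card_filter_not _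
    have : finrank (ZMod 2) (LinearMap.ker (evalAt (ZMod 2) v)) = 1 := by omega
    simp only [this, pow_one] at hzero
    omega

end Configuration

section Subspaces

lemma card_filter_univ_coe {α : Type*} (s : Finset α) (P : α → Prop) [DecidablePred P] :
    #{x : s | P x} = #{x ∈ s | P x} := by
  rw [univ_eq_attach, filter_attach, card_map, card_attach]

variable {U : Type*} [AddCommGroup U] [Module (ZMod 2) U] [FiniteDimensional (ZMod 2) U]

theorem exists_sparseNonincidence {S T : Finset (Submodule (ZMod 2) U)}
    (hS : ∀ p ∈ S, finrank (ZMod 2) p = 1)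
    (hT : ∀ H ∈ T, finrank (ZMod 2) H + 1 = finrank (ZMod 2) U)
    (hSdeg : ∀ p ∈ S, #{H ∈ T | ¬p ≤ H} ≤ 2) (hTdeg : ∀ H ∈ T, #{p ∈ S | ¬p ≤ H} ≤ 2) :
    ∃ (v : S → U) (φ : T → Dual (ZMod 2) U), SparseNonincidence v φ := by
  choose! w hw0 hw using fun p hp => exists_eq_span_singleton_of_finrank_eq_one (hS p hp)
  choose! f hf0 hf using fun H hH => exists_eq_ker_of_finrank_add_one_eq (hT H hH)
  have hinc {p H} (hp : p ∈ S) (hH : H ∈ T) : ¬p ≤ H ↔ f H (w p) ≠ 0 := by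
    rw [Ne, ← LinearMap.mem_ker, ← hf H hH, ← span_singleton_le_iff_mem, ← hw p hp]
  refine ⟨fun p => w p, fun H => f H, fun p q hpq => ?_, fun p => hw0 p p.2,
    fun H K hHK => ?_, fun H => hf0 H H.2, fun p => ?_, fun H => ?_⟩
  · exact Subtype.ext <| (hw p p.2).trans <| (congrArg (span _ {·}) hpq).trans (hw q q.2).symm
  · exact Subtype.ext <| (hf H H.2).trans <| (congrArg LinearMap.ker hHK).trans (hf K K.2).symm
  · rw [card_filter_univ_coe T fun H => f H (w p) ≠ 0]
    exact (filter_congr fun H hH => hinc p.2 hH).symm ▸ hSdeg p p.2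
  · rw [card_filter_univ_coe S fun p => f H (w p) ≠ 0]
    exact (filter_congr fun p hp => hinc hp H.2).symm ▸ hTdeg H H.2

end Subspaces

end PGIncidence

open PGIncidence

/-- In the point-hyperplane incidence bipartite graph of PG(5, GF(2)), there is
no induced subgraph with 10 points and 10 hyperplanes in which every point lies
on at least 8 of the 10 hyperplanes and every hyperplane contains at least 8 of
the 10 points. -/
theorem pg5_gf2_no_10_10_mindeg8_subgraph :
    ¬ ∃ (S T : Finset (Submodule (ZMod 2) (Fin 6 → ZMod 2))),
      S.card = 10 ∧ T.card = 10 ∧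
      (∀ p ∈ S, finrank (ZMod 2) p = 1) ∧
      (∀ H ∈ T, finrank (ZMod 2) H = 5) ∧
      (∀ p ∈ S, 8 ≤ (T.filter (fun H => p ≤ H)).card) ∧
      (∀ H ∈ T, 8 ≤ (S.filter (fun p => p ≤ H)).card) := by
  rintro ⟨S, T, hS, hT, hS1, hT5, hSdeg, hTdeg⟩
  have hU : finrank (ZMod 2) (Fin 6 → ZMod 2) = 6 := by simp
  obtain ⟨v, φ, h⟩ := exists_sparseNonincidence hS1 (fun H hH => by rw [hT5 H hH, hU])
    (fun p hp => by
      have := hSdeg p hp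
      have := card_filter_add_card_filter_not (s := T) (p ≤ ·)
      omega)
    (fun H hH => by
      have := hTdeg H hH
      have := card_filter_add_card_filter_not (s := S) (· ≤ H)
      omega)
  exact not_sparseNonincidence hU (by simpa) (by simpa) h
end
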